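/- In the two-period simultaneous binary response panel model, the U* set for outcome y = (y₁₁,y₁₂,y₂₁,y₂₂) = (0,1,0,1) equals {u : Δu₁ ≥ -Δzβ₁ - α₁ and Δu₂ ≥ -Δzβ₂ - α₂}, where U*(y,z) = {u ∈ ℝ⁴ : ∃ (v₁,v₂) ∈ ℝ² such that for t ∈ {1,2}, y₁ₜ = 1[α₁y₂ₜ + z_tβ₁ + v₁ + u₁ₜ ≥ 0] and y₂ₜ = 1[α₂y₁ₜ + z_tβ₂ + v₂ + u₂ₜ ≥ 0] hold (with the weak-inequality indicator convention)}. -/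
import Mathlib


open scoped BigOperators

def dot {k : ℕ} (x y : Fin k → ℝ) : ℝ := ∑ i, x i * y i

def b2r (b : Bool) : ℝ := if b then 1 else 0

/-- `U*` set in the two-period simultaneous binary response panel model.
`u j t` is the latent variable of outcome `j ∈ {1,2}` in period `t` and
`y1 t`, `y2 t` are the two binary outcomes in period `t`. -/
def UstarSES {k : ℕ} (α1 α2 : ℝ) (β1 β2 : Fin k → ℝ) (z : Fin 2 → Fin k → ℝ)
    (y1 y2 : Fin 2 → Bool) : Set (Fin 2 → Fin 2 → ℝ) :=
  {u | ∃ v1 v2 : ℝ, ∀ t : Fin 2,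
    (y1 t = true → 0 ≤ α1 * b2r (y2 t) + dot (z t) β1 + v1 + u 0 t) ∧
    (y1 t = false → α1 * b2r (y2 t) + dot (z t) β1 + v1 + u 0 t ≤ 0) ∧
    (y2 t = true → 0 ≤ α2 * b2r (y1 t) + dot (z t) β2 + v2 + u 1 t) ∧
    (y2 t = false → α2 * b2r (y1 t) + dot (z t) β2 + v2 + u 1 t ≤ 0)}

theorem ses_Ustar_0101 {k : ℕ} (α1 α2 : ℝ) (β1 β2 : Fin k → ℝ)
    (z : Fin 2 → Fin k → ℝ) :
    UstarSES α1 α2 β1 β2 z ![false, true] ![false, true] =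
      {u | u 0 1 - u 0 0 ≥ -(dot (z 1) β1 - dot (z 0) β1) - α1 ∧
           u 1 1 - u 1 0 ≥ -(dot (z 1) β2 - dot (z 0) β2) - α2} := by
  ext u
  simp only [UstarSES, Set.mem_setOf_eq]
  constructor
  · rintro ⟨v1, v2, h⟩
    have h0 := h 0
    have h1 := h 1
    simp [b2r] at h0 h1
    constructor
    · linarith [h0.1, h1.1]
    · linarith [h0.2, h1.2]
  · rintro ⟨h1, h2⟩
    refine ⟨-(dot (z 0) β1 + u 0 0), -(dot (z 0) β2 + u 1 0), ?_⟩
    intro t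
    fin_cases t <;> simp [b2r] <;> constructor <;> linarith
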